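/- arXiv:2307.05640 — 4 statements merged into one kernel-verified Lean document; each statement's English description precedes it below -/
import Mathlib

section
/- Let L be a lattice of ℝ^k. Then there exists a sublattice L' of L (a finite-index subgroup of L which is again a lattice of ℝ^k) such that λ(L') = λ(L) and λ(L') ≤ 2·τ(L'). -/
open Metric Set

/-!
Among the bases of `ℝ^k` made of vectors of `L` of length at most `λ(L)` (finitely many, since
`L` is discrete, and at least one, since the infimum defining `λ(L)` is attained) pick one, `v`,
whose `ℤ`-span `L'` is minimal for inclusion; then `λ(L') = λ(L)`. If some nonzero `w ∈ L'` had
`2‖w‖ ≤ λ(L)`, replacing a vector `v j` on which `w` has a nonzero coordinate by `2w` would give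
another such basis, spanning a proper subgroup of `L'`: every vector of it has an even `j`-th
coordinate, while `v j` does not. This contradicts minimality.
-/

noncomputable section

/-- A lattice of `ℝ^k`: the additive subgroup generated (over `ℤ`) by a basis of `ℝ^k`. -/
def IsLattice (k : ℕ) (L : AddSubgroup (EuclideanSpace ℝ (Fin k))) : Prop :=
  ∃ b : Module.Basis (Fin k) ℝ (EuclideanSpace ℝ (Fin k)),
    L = AddSubgroup.closure (Set.range b)

/-- The shortest vector `τ(L)` of a lattice. -/
def shortestVector {k : ℕ} (L : AddSubgroup (EuclideanSpace ℝ (Fin k))) : ℝ :=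
  sInf {r : ℝ | ∃ v ∈ L, v ≠ 0 ∧ r = ‖v‖}

/-- The shortest generating radius `λ(L)` of a lattice: the least `r` such that `L` contains
`k` linearly independent vectors of length at most `r`. -/
def shortestGenRadius {k : ℕ} (L : AddSubgroup (EuclideanSpace ℝ (Fin k))) : ℝ :=
  sInf {r : ℝ | ∃ v : Fin k → EuclideanSpace ℝ (Fin k),
    LinearIndependent ℝ v ∧ (∀ i, v i ∈ L) ∧ ∀ i, ‖v i‖ ≤ r}

namespace Module.Basis

variable {ι K E : Type*} [Field K] [AddCommGroup E] [Module K E] (b : Basis ι K E)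

theorem linearIndependent_update [DecidableEq ι] {j : ι} {x : E} (hx : b.repr x j ≠ 0) :
    LinearIndependent K (Function.update b j x) :=
  b.linearIndependent.update j x
    ⟨1, one_mem _, b.repr x, mem_nonZeroDivisors_of_ne_zero hx,
      by rw [one_smul, b.linearCombination_repr]⟩

theorem exists_intCast_eq_repr_of_mem_closure [CharZero K] {x : E}
    (hx : x ∈ AddSubgroup.closure (range b)) (i : ι) : ∃ n : ℤ, (n : K) = b.repr x i := by
  rw [← Submodule.span_int_eq_addSubgroupClosure, Submodule.mem_toAddSubgroup,
    b.mem_span_iff_repr_mem ℤ] at hx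
  exact hx i

theorem notMem_closure_update_two_smul [DecidableEq ι] [CharZero K] {w : E}
    (hw : w ∈ AddSubgroup.closure (range b)) (j : ι) :
    b j ∉ AddSubgroup.closure (range (Function.update b j ((2 : K) • w))) := by
  intro hj
  have hle : AddSubgroup.closure (range (Function.update b j ((2 : K) • w))) ≤
      (AddSubgroup.zmultiples (2 : K)).comap (b.coord j).toAddMonoidHom := by
    rw [AddSubgroup.closure_le]
    rintro _ ⟨i, rfl⟩
    rcases eq_or_ne i j with rfl | hij
    · obtain ⟨n, hn⟩ := b.exists_intCast_eq_repr_of_mem_closure hw i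
      exact ⟨n, by simp [← hn, mul_comm]⟩
    · simp [Function.update_of_ne hij, hij.symm]
  obtain ⟨n, hn⟩ := hle hj
  have h2 : ((n * 2 : ℤ) : K) = 1 := by simpa using hn
  have : n * 2 = 1 := by exact_mod_cast h2
  omega

end Module.Basis

section Lattice

variable {k : ℕ} {L L' : AddSubgroup (EuclideanSpace ℝ (Fin k))} {r : ℝ}
  {v : Fin k → EuclideanSpace ℝ (Fin k)}

theorem isLattice_closure_of_linearIndependent (hv : LinearIndependent ℝ v) :
    IsLattice k (AddSubgroup.closure (range v)) :=
  ⟨basisOfLinearIndependentOfCardEqFinrank' v hv (by simp), by simp⟩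

theorem IsLattice.finite_inter_closedBall (hL : IsLattice k L) (r : ℝ) :
    ((L : Set (EuclideanSpace ℝ (Fin k))) ∩ closedBall 0 r).Finite := by
  obtain ⟨b, rfl⟩ := hL
  rw [← Submodule.span_int_eq_addSubgroupClosure, inter_comm]
  exact ZSpan.setFinite_inter b isBounded_closedBall

theorem IsLattice.relIndex_ne_zero (hL' : IsLattice k L') (hL : IsLattice k L) (h : L' ≤ L) :
    L'.relIndex L ≠ 0 := by
  obtain ⟨b', rfl⟩ := hL'
  obtain ⟨b, rfl⟩ := hL
  simp_rw [← Submodule.span_int_eq_addSubgroupClosure, Submodule.toAddSubgroup_le] at h ⊢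
  rw [← Nat.cast_ne_zero (R := ℝ), ← ZLattice.covolume_div_covolume_eq_relIndex' _ _ h]
  exact (div_pos (ZLattice.covolume_pos (Submodule.span ℤ (range b')))
    (ZLattice.covolume_pos (Submodule.span ℤ (range b)))).ne'


def IsShortBasis (L : AddSubgroup (EuclideanSpace ℝ (Fin k))) (r : ℝ)
    (v : Fin k → EuclideanSpace ℝ (Fin k)) : Prop :=
  LinearIndependent ℝ v ∧ (∀ i, v i ∈ L) ∧ ∀ i, ‖v i‖ ≤ r

theorem IsShortBasis.mono (hv : IsShortBasis L' r v) (h : L' ≤ L) : IsShortBasis L r v :=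
  ⟨hv.1, fun i => h (hv.2.1 i), hv.2.2⟩

theorem IsShortBasis.closure_le (hv : IsShortBasis L r v) : AddSubgroup.closure (range v) ≤ L :=
  (AddSubgroup.closure_le L).2 <| range_subset_iff.2 hv.2.1

theorem IsShortBasis.closure_range (hv : IsShortBasis L r v) :
    IsShortBasis (AddSubgroup.closure (range v)) r v :=
  ⟨hv.1, fun i => AddSubgroup.subset_closure (mem_range_self i), hv.2.2⟩

theorem shortestGenRadius_le (hk : k ≠ 0) (hv : IsShortBasis L r v) : shortestGenRadius L ≤ r :=
  csInf_le ⟨0, fun _ ⟨_, hw⟩ => (norm_nonneg _).trans (hw.2.2 ⟨0, Nat.pos_of_ne_zero hk⟩)⟩ ⟨v, hv⟩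

theorem shortestGenRadius_eq_of_le (hk : k ≠ 0) (h : L' ≤ L)
    (hv : IsShortBasis L' (shortestGenRadius L) v) : shortestGenRadius L' = shortestGenRadius L :=
  le_antisymm (shortestGenRadius_le hk hv)
    (le_csInf ⟨_, v, hv⟩ fun _ ⟨_, hu⟩ => shortestGenRadius_le hk (IsShortBasis.mono hu h))

theorem IsLattice.finite_setOf_isShortBasis (hL : IsLattice k L) (r : ℝ) :
    {v | IsShortBasis L r v}.Finite :=
  (Set.Finite.pi' fun _ => hL.finite_inter_closedBall r).subset fun _ hv i =>
    ⟨hv.2.1 i, mem_closedBall_zero_iff.2 (hv.2.2 i)⟩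

theorem IsLattice.exists_isShortBasis_shortestGenRadius (hL : IsLattice k L) :
    ∃ v, IsShortBasis L (shortestGenRadius L) v := by
  obtain ⟨b, hb⟩ := id hL
  have hb₀ : IsShortBasis L ‖⇑b‖ b := ⟨b.linearIndependent,
    fun i => hb ▸ AddSubgroup.subset_closure (mem_range_self i), norm_le_pi_norm _⟩
  obtain ⟨v, hv, hmin⟩ := Set.exists_min_image _ (‖·‖) (hL.finite_setOf_isShortBasis _) ⟨_, hb₀⟩
  refine ⟨v, hv.1, hv.2.1, fun i => le_csInf ⟨_, _, hb₀⟩ ?_⟩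
  rintro r ⟨w, hw⟩
  rcases le_total r ‖⇑b‖ with hr | hr
  · calc ‖v i‖ ≤ ‖v‖ := norm_le_pi_norm v i
      _ ≤ ‖w‖ := hmin w ⟨hw.1, hw.2.1, fun i => (hw.2.2 i).trans hr⟩
      _ ≤ r := (pi_norm_le_iff_of_nonneg ((norm_nonneg _).trans (hw.2.2 i))).2 hw.2.2
  · exact (hv.2.2 i).trans hr

theorem IsLattice.exists_isShortBasis_minimal_closure (hL : IsLattice k L) :
    ∃ v, IsShortBasis L (shortestGenRadius L) v ∧ ∀ u, IsShortBasis L (shortestGenRadius L) u →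
      ¬AddSubgroup.closure (range u) < AddSubgroup.closure (range v) := by
  obtain ⟨v₀, hv₀⟩ := hL.exists_isShortBasis_shortestGenRadius
  obtain ⟨v, hv, hmin⟩ := Set.Finite.exists_minimalFor (fun v => AddSubgroup.closure (range v)) _
    (hL.finite_setOf_isShortBasis _) ⟨v₀, hv₀⟩
  exact ⟨v, hv, fun u hu hlt => hlt.not_ge (hmin hu hlt.le)⟩

theorem IsShortBasis.exists_closure_lt (hv : IsShortBasis L r v) {w : EuclideanSpace ℝ (Fin k)}
    (hw : w ∈ AddSubgroup.closure (range v)) (hw₀ : w ≠ 0) (hwr : 2 * ‖w‖ ≤ r) :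
    ∃ u, IsShortBasis L r u ∧ AddSubgroup.closure (range u) < AddSubgroup.closure (range v) := by
  classical
  set b := basisOfLinearIndependentOfCardEqFinrank' v hv.1 (by simp)
  have hb : ⇑b = v := by simp [b]
  obtain ⟨j, hj⟩ : ∃ j, b.repr w j ≠ 0 := by
    by_contra! h
    exact hw₀ (b.repr.map_eq_zero_iff.1 (Finsupp.ext h))
  have hu : ∀ i, Function.update v j ((2 : ℝ) • w) i ∈ AddSubgroup.closure (range v) := by
    intro i
    rcases eq_or_ne i j with rfl | hij
    · rw [Function.update_self, two_smul]
      exact add_mem hw hw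
    · simpa [Function.update_of_ne hij] using AddSubgroup.subset_closure (mem_range_self i)
  refine ⟨Function.update v j ((2 : ℝ) • w), ⟨?_, fun i => hv.closure_le (hu i), fun i => ?_⟩, ?_⟩
  · rw [← hb]
    exact b.linearIndependent_update (by simpa using hj)
  · rcases eq_or_ne i j with rfl | hij
    · simpa [norm_smul] using hwr
    · simpa [Function.update_of_ne hij] using hv.2.2 i
  · refine lt_of_le_of_ne ((AddSubgroup.closure_le _).2 (range_subset_iff.2 hu)) fun h => ?_
    rw [← hb] at h hw
    exact b.notMem_closure_update_two_smul hw j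
      (h ▸ AddSubgroup.subset_closure (mem_range_self j))

end Lattice

theorem le_shortestVector {k : ℕ} {L : AddSubgroup (EuclideanSpace ℝ (Fin k))} {c : ℝ}
    (hL : ∃ w ∈ L, w ≠ 0) (h : ∀ w ∈ L, w ≠ 0 → c ≤ ‖w‖) : c ≤ shortestVector L := by
  obtain ⟨w, hw, hw₀⟩ := hL
  exact le_csInf ⟨_, w, hw, hw₀, rfl⟩ fun _ ⟨w, hw, hw₀, hr⟩ => hr ▸ h w hw hw₀

-- In dimension `0` both infima are junk values: `sInf ∅ = sInf univ = 0`.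
theorem shortestVector_fin_zero (L : AddSubgroup (EuclideanSpace ℝ (Fin 0))) :
    shortestVector L = 0 := by
  simp [shortestVector, Subsingleton.elim _ (0 : EuclideanSpace ℝ (Fin 0))]

theorem shortestGenRadius_fin_zero (L : AddSubgroup (EuclideanSpace ℝ (Fin 0))) :
    shortestGenRadius L = 0 := by
  have : {r : ℝ | ∃ v : Fin 0 → EuclideanSpace ℝ (Fin 0),
      LinearIndependent ℝ v ∧ (∀ i, v i ∈ L) ∧ ∀ i, ‖v i‖ ≤ r} = univ :=
    eq_univ_of_forall fun _ => ⟨finZeroElim, linearIndependent_empty_type, finZeroElim, finZeroElim⟩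
  rw [shortestGenRadius, this, Real.sInf_univ]

/-- Every lattice `L` of `ℝ^k` contains a sublattice `L'` (a finite-index subgroup which is
again a lattice) with `λ(L') = λ(L)` and `λ(L') ≤ 2·τ(L')`. -/
theorem exists_controlled_sublattice (k : ℕ)
    (L : AddSubgroup (EuclideanSpace ℝ (Fin k))) (hL : IsLattice k L) :
    ∃ L' : AddSubgroup (EuclideanSpace ℝ (Fin k)),
      L' ≤ L ∧ IsLattice k L' ∧ L'.relIndex L ≠ 0 ∧
      shortestGenRadius L' = shortestGenRadius L ∧
      shortestGenRadius L' ≤ 2 * shortestVector L' := by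
  rcases eq_or_ne k 0 with rfl | hk
  · exact ⟨L, le_rfl, hL, by simp, rfl,
      by simp [shortestGenRadius_fin_zero, shortestVector_fin_zero]⟩
  obtain ⟨v, hv, hmin⟩ := hL.exists_isShortBasis_minimal_closure
  have hL' := isLattice_closure_of_linearIndependent hv.1
  have hgen := shortestGenRadius_eq_of_le hk hv.closure_le hv.closure_range
  have hτ : shortestGenRadius L / 2 ≤ shortestVector (AddSubgroup.closure (range v)) := by
    refine le_shortestVector ⟨v ⟨0, Nat.pos_of_ne_zero hk⟩, hv.closure_range.2.1 _, hv.1.ne_zero _⟩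
      fun w hw hw₀ => ?_
    by_contra! hshort
    obtain ⟨u, hu, hlt⟩ := hv.exists_closure_lt hw hw₀ (by linarith)
    exact hmin u hu hlt
  exact ⟨_, hv.closure_le, hL', hL'.relIndex_ne_zero hL hv.closure_le, hgen, by linarith⟩
end
end

section
/- Let A be an almost abelian topological group. Then there exists k ≥ 0 such that for every compact, open, normal subgroup N of A, the quotient group A/N is discrete, finitely generated and virtually abelian of rank k. (This k is called the rank rk(A) of A.) -/
noncomputable section

/-- Virtually nilpotent group. -/
def VirtuallyNilpotent (H : Type*) [Group H] : Prop :=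
  ∃ K : Subgroup H, K.FiniteIndex ∧ Group.IsNilpotent K

/-- Virtually abelian group. -/
def VirtuallyAbelian (H : Type*) [Group H] : Prop :=
  ∃ K : Subgroup H, K.FiniteIndex ∧ ∀ a ∈ K, ∀ b ∈ K, a * b = b * a

/-- A topological group is almost nilpotent if it contains a compact open normal subgroup `N`
such that the quotient `A/N` is discrete, finitely generated and virtually nilpotent. -/
def AlmostNilpotent (A : Type*) [Group A] [TopologicalSpace A] : Prop :=
  ∃ (N : Subgroup A) (_ : N.Normal), IsOpen (N : Set A) ∧ IsCompact (N : Set A) ∧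
    DiscreteTopology (A ⧸ N) ∧ Group.FG (A ⧸ N) ∧ VirtuallyNilpotent (A ⧸ N)

/-- A topological group is almost abelian if it contains a compact open normal subgroup `N`
such that the quotient `A/N` is discrete, finitely generated and virtually abelian. -/
def AlmostAbelian (A : Type*) [Group A] [TopologicalSpace A] : Prop :=
  ∃ (N : Subgroup A) (_ : N.Normal), IsOpen (N : Set A) ∧ IsCompact (N : Set A) ∧
    DiscreteTopology (A ⧸ N) ∧ Group.FG (A ⧸ N) ∧ VirtuallyAbelian (A ⧸ N)

/-- A discrete, finitely generated, virtually abelian group has rank `k` if it contains a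
finite-index free abelian subgroup isomorphic to `ℤ^k`. -/
def HasFreeAbelianRank (H : Type*) [Group H] (k : ℕ) : Prop :=
  ∃ K : Subgroup H, K.FiniteIndex ∧ Nonempty (↥K ≃* Multiplicative (Fin k → ℤ))

/-- `k` is a rank of the almost abelian group `A`, witnessed by some compact open normal
subgroup. -/
def IsRankOf (A : Type*) [Group A] [TopologicalSpace A] (k : ℕ) : Prop :=
  ∃ (N : Subgroup A) (_ : N.Normal), IsOpen (N : Set A) ∧ IsCompact (N : Set A) ∧
    DiscreteTopology (A ⧸ N) ∧ Group.FG (A ⧸ N) ∧ HasFreeAbelianRank (A ⧸ N) k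

/-- A closed subgroup `H` of a topological group `G` is cocompact if the quotient space
`G/H` is compact. -/
def CocompactIn {G : Type*} [Group G] [TopologicalSpace G] (H : Subgroup G) : Prop :=
  CompactSpace (G ⧸ H)

/-- `H` and `K` are almost commensurable: `H ∩ K` is cocompact in both `H` and `K`. -/
def AlmostCommensurable {G : Type*} [Group G] [TopologicalSpace G] (H K : Subgroup G) : Prop :=
  CompactSpace (↥H ⧸ (H ⊓ K).subgroupOf H) ∧ CompactSpace (↥K ⧸ (H ⊓ K).subgroupOf K)

/-- `H` is almost commensurated in `G`: `H` and `gHg⁻¹` are almost commensurable for all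
`g ∈ G`. -/
def AlmostCommensurated {G : Type*} [Group G] [TopologicalSpace G] (H : Subgroup G) : Prop :=
  ∀ g : G, AlmostCommensurable H (H.map (MulAut.conj g).toMonoidHom)

/-!
If `N` and `N₀` are compact open normal subgroups, so is `M = N ⊓ N₀`, and `A ⧸ M` maps onto
`A ⧸ N` and onto `A ⧸ N₀` with finite kernels (images of compact sets in a discrete group). So it
suffices that containing a finite-index copy of `ℤᵏ` passes along a surjection `f : G → H` with
finite kernel in both directions. Forwards this holds because `ℤᵏ` is torsion-free. Backwards,
lift a basis of the copy of `ℤᵏ` in `H` to `c i : G` and let `a i` be a power of `c i` that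
centralizes `ker f`. The commutator of `a i` with a lift of any element of the abelian group lies
in `ker f`, so it commutes with `a i`, and then `a i ^ |ker f|` commutes with that lift. Hence the
`b i = a i ^ |ker f|` span a copy of `ℤᵏ` in `G`; its image has finite index in `H`, so it has
finite index in `G`.
-/

open Multiplicative

section Commutators

open scoped commutatorElement

variable {G H : Type*} [Group G] [Group H]

theorem commutatorElement_pow_left_of_commute {a b : G} (h : Commute a ⁅a, b⁆) (n : ℕ) :
    ⁅a ^ n, b⁆ = ⁅a, b⁆ ^ n := by
  induction n with
  | zero => simp
  | succ n ih =>
    calc ⁅a ^ (n + 1), b⁆ = a * ⁅a ^ n, b⁆ * a⁻¹ * ⁅a, b⁆ := by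
          simp only [commutatorElement_def, pow_succ', mul_inv_rev]; group
      _ = ⁅a, b⁆ ^ (n + 1) := by
          rw [ih, (h.pow_right n).eq, mul_inv_cancel_right, pow_succ]

theorem MonoidHom.commute_pow_card_ker {f : G →* H} [Finite f.ker] {a b : G}
    (ha : a ∈ Subgroup.centralizer (f.ker : Set G)) (hab : Commute (f a) (f b)) :
    Commute (a ^ Nat.card f.ker) b := by
  have hker : ⁅a, b⁆ ∈ f.ker := by
    rw [mem_ker, map_commutatorElement, commutatorElement_eq_one_iff_commute]
    exact hab
  have hcomm : Commute a ⁅a, b⁆ := (Subgroup.mem_centralizer_iff.mp ha _ hker).symm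
  rw [← commutatorElement_eq_one_iff_commute, commutatorElement_pow_left_of_commute hcomm]
  exact congrArg Subtype.val (pow_card_eq_one' (G := f.ker) (x := ⟨_, hker⟩))

end Commutators

namespace Subgroup

variable {G : Type*} [Group G]

theorem finiteIndex_centralizer_of_finite (N : Subgroup G) [N.Normal] [Finite N] :
    (centralizer (N : Set G)).FiniteIndex :=
  finiteIndex_of_le (H := (MulAut.conjNormal : G →* MulAut N).ker) fun g hg ↦
    mem_centralizer_iff.mpr fun x hx ↦ by
      have : g * x * g⁻¹ = x := by
        simpa using congrArg Subtype.val (DFunLike.congr_fun hg ⟨x, hx⟩)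
      exact (mul_inv_eq_iff_eq_mul.mp this).symm

theorem finiteIndex_of_finiteIndex_sup_of_finite {N L : Subgroup G} [N.Normal] [Finite N]
    [(N ⊔ L).FiniteIndex] : L.FiniteIndex := by
  suffices Function.Surjective fun p : (G ⧸ (N ⊔ L)) × N ↦ ((p.1.out * p.2 : G) : G ⧸ L) by
    have := Finite.of_surjective _ this
    exact finiteIndex_of_finite_quotient
  intro q
  induction q using QuotientGroup.induction_on with | H g => ?_
  have hg : (g : G ⧸ (N ⊔ L)).out⁻¹ * g ∈ N ⊔ L := QuotientGroup.eq.mp (QuotientGroup.out_eq' _)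
  rw [← SetLike.mem_coe, normal_mul] at hg
  obtain ⟨x, hx, l, hl, hxl⟩ := hg
  refine ⟨((g : G ⧸ (N ⊔ L)), ⟨x, hx⟩), QuotientGroup.eq.mpr ?_⟩
  have : (((g : G ⧸ (N ⊔ L)).out * x)⁻¹ * g) = l := by
    rw [mul_inv_rev, mul_assoc, ← hxl, inv_mul_cancel_left]
  exact this ▸ hl

end Subgroup

theorem Group.fg_of_surjective_of_finite_ker {G H : Type*} [Group G] [Group H] {f : G →* H}
    (hf : Function.Surjective f) [Finite f.ker] [Group.FG H] : Group.FG G := by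
  obtain ⟨S, hS, hSfin⟩ := Group.fg_iff.mp ‹Group.FG H›
  set T := Function.surjInv hf '' S
  have hT : (Subgroup.closure T).map f = ⊤ := by
    rw [MonoidHom.map_closure, Set.image_image]
    simpa [Function.surjInv_eq hf] using hS
  have htop : Subgroup.closure T ⊔ f.ker = ⊤ := by
    rw [← Subgroup.comap_map_eq, hT, Subgroup.comap_top]
  rw [Group.fg_def, ← htop]
  exact ((Subgroup.fg_iff _).mpr ⟨T, rfl, hSfin.image _⟩).sup
    ((Group.fg_iff_subgroup_fg _).mp inferInstance)

section FreeAbelianRank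

open Subgroup

variable {G H : Type*} [Group G] [Group H] {k : ℕ}

theorem hasFreeAbelianRank_iff_pi :
    HasFreeAbelianRank G k ↔
      ∃ K : Subgroup G, K.FiniteIndex ∧ Nonempty (K ≃* (Fin k → Multiplicative ℤ)) :=
  let e := MulEquiv.funMultiplicative (Fin k) ℤ
  ⟨fun ⟨K, hK, ⟨ι⟩⟩ ↦ ⟨K, hK, ⟨ι.trans e⟩⟩, fun ⟨K, hK, ⟨ι⟩⟩ ↦ ⟨K, hK, ⟨ι.trans e.symm⟩⟩⟩

theorem CommGroup.exists_hasFreeAbelianRank (A : Type*) [CommGroup A] [Group.FG A] :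
    ∃ k, HasFreeAbelianRank A k := by
  obtain ⟨ι, j, _, _, p, hp, e, ⟨φ⟩⟩ := CommGroup.equiv_free_prod_prod_multiplicative_zmod A
  have (i : ι) : NeZero (p i ^ e i) := ⟨pow_ne_zero _ (hp i).ne_zero⟩
  let torsionPart := (MonoidHom.snd _ _).comp φ.toMonoidHom
  let freePart := (MonoidHom.fst _ _).comp (φ.toMonoidHom.comp torsionPart.ker.subtype)
  have hbij : Function.Bijective freePart := by
    refine ⟨(injective_iff_map_eq_one _).mpr fun x hx ↦ Subtype.ext (φ.injective ?_), fun v ↦ ?_⟩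
    · rw [OneMemClass.coe_one, map_one]
      exact Prod.ext hx x.2
    · refine ⟨⟨φ.symm (v, 1), ?_⟩, ?_⟩
      · show (φ (φ.symm (v, 1))).2 = 1
        simp
      · show (φ (φ.symm (v, 1))).1 = v
        simp
  refine ⟨Fintype.card j, hasFreeAbelianRank_iff_pi.mpr ⟨torsionPart.ker, inferInstance,
    ⟨(MulEquiv.ofBijective freePart hbij).trans
      (MulEquiv.arrowCongr (Fintype.equivFin j) (MulEquiv.refl _))⟩⟩⟩

theorem HasFreeAbelianRank.of_finiteIndex_subgroup {K : Subgroup G} [K.FiniteIndex]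
    (h : HasFreeAbelianRank K k) : HasFreeAbelianRank G k := by
  obtain ⟨L, hL, ⟨ι⟩⟩ := h
  refine ⟨L.map K.subtype, ⟨?_⟩, ⟨(L.equivMapOfInjective _ K.subtype_injective).symm.trans ι⟩⟩
  rw [index_map_subtype]
  exact mul_ne_zero hL.index_ne_zero FiniteIndex.index_ne_zero

open scoped IsMulCommutative in
theorem VirtuallyAbelian.exists_hasFreeAbelianRank [Group.FG G] (h : VirtuallyAbelian G) :
    ∃ k, HasFreeAbelianRank G k := by
  obtain ⟨K, hK, hcomm⟩ := h
  have : IsMulCommutative K := ⟨⟨fun a b ↦ Subtype.ext (hcomm _ a.2 _ b.2)⟩⟩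
  obtain ⟨k, hk⟩ := CommGroup.exists_hasFreeAbelianRank K
  exact ⟨k, hk.of_finiteIndex_subgroup⟩

theorem HasFreeAbelianRank.map_of_finite_ker {f : G →* H} (hf : Function.Surjective f)
    [Finite f.ker] (h : HasFreeAbelianRank G k) : HasFreeAbelianRank H k := by
  obtain ⟨K, hK, ⟨ι⟩⟩ := h
  have hinj : Function.Injective (f.subgroupMap K) := by
    refine (injective_iff_map_eq_one _).mpr fun x hx ↦ ι.injective ?_
    have hx : IsOfFinOrder (x : G) :=
      f.ker.subtype.isOfFinOrder (isOfFinOrder_of_finite (⟨x, congrArg Subtype.val hx⟩ : f.ker))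
    rw [map_one]
    exact (ι.toMonoidHom.isOfFinOrder (K.subtype_injective.isOfFinOrder_iff.mp hx)).eq_one'
  exact ⟨K.map f, ⟨ne_zero_of_dvd_ne_zero hK.index_ne_zero (index_map_dvd _ hf)⟩,
    ⟨(MulEquiv.ofBijective _ ⟨hinj, f.subgroupMap_surjective K⟩).symm.trans ι⟩⟩

theorem hasFreeAbelianRank_of_lift_pow {f : G →* H} (hf : Function.Surjective f) [Finite f.ker]
    {K : Subgroup H} [K.FiniteIndex] (ι : K ≃* (Fin k → Multiplicative ℤ)) {n : ℕ} (hn : n ≠ 0)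
    (s : (Fin k → Multiplicative ℤ) →* G)
    (hs : ∀ i, f (s (Pi.mulSingle i (ofAdd 1))) = ι.symm (Pi.mulSingle i (ofAdd 1) ^ n)) :
    HasFreeAbelianRank G k := by
  let ιinv : (Fin k → Multiplicative ℤ) →* K := ι.symm
  let single := MonoidHom.mulSingle (fun _ : Fin k ↦ Multiplicative ℤ)
  set t := K.subtype.comp (ιinv.comp (powMonoidHom n))
  have hfs : f.comp s = t := MonoidHom.pi_ext fun i x ↦ DFunLike.congr_fun
    (MonoidHom.ext_mint (f := (f.comp s).comp (single i)) (g := t.comp (single i))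
      (by simpa [t, single, ιinv] using hs i)) x
  have hinj : Function.Injective s := fun x y hxy ↦ by
    have := DFunLike.congr_fun hfs x ▸ DFunLike.congr_fun hfs y ▸ congrArg f hxy
    exact pow_left_injective hn (ι.symm.injective (Subtype.ext this))
  let T := ((powMonoidHom n).range.map ιinv).map K.subtype
  have : T.FiniteIndex := by
    have := finiteIndex_range_powMonoidHom_of_fg (Fin k → Multiplicative ℤ) hn
    constructor
    rw [index_map_subtype, index_map_equiv]
    exact mul_ne_zero FiniteIndex.index_ne_zero FiniteIndex.index_ne_zero
  have : (s.range.map f).FiniteIndex := finiteIndex_of_le (H := T) <| by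
    rintro _ ⟨_, ⟨_, ⟨x, rfl⟩, rfl⟩, rfl⟩
    exact ⟨s x, ⟨x, rfl⟩, DFunLike.congr_fun hfs x⟩
  have : (f.ker ⊔ s.range).FiniteIndex := ⟨by
    rw [sup_comm, ← comap_map_eq, index_comap_of_surjective _ hf]
    exact FiniteIndex.index_ne_zero⟩
  exact hasFreeAbelianRank_iff_pi.mpr
    ⟨s.range, finiteIndex_of_finiteIndex_sup_of_finite (N := f.ker), ⟨(MonoidHom.ofInjective hinj).symm⟩⟩

theorem HasFreeAbelianRank.of_surjective_of_finite_ker {f : G →* H} (hf : Function.Surjective f)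
    [Finite f.ker] (h : HasFreeAbelianRank H k) : HasFreeAbelianRank G k := by
  obtain ⟨K, _, ⟨ι⟩⟩ := hasFreeAbelianRank_iff_pi.mp h
  set Z := Subgroup.centralizer (f.ker : Set G)
  have : Z.FiniteIndex := f.ker.finiteIndex_centralizer_of_finite
  have hn : Z.index * Nat.card f.ker ≠ 0 :=
    mul_ne_zero FiniteIndex.index_ne_zero (Nat.card_pos (α := f.ker)).ne'
  choose c hc using fun i ↦ hf (ι.symm (Pi.mulSingle i (ofAdd 1)))
  have hfc (i : Fin k) (n : ℕ) : f (c i ^ n) = ι.symm (Pi.mulSingle i (ofAdd 1) ^ n) := by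
    rw [map_pow, hc, map_pow, Subgroup.coe_pow]
  have hKcomm (x y) : Commute (ι.symm x : H) (ι.symm y) :=
    ((Commute.all x y).map ι.symm.toMonoidHom).map K.subtype
  set b : Fin k → G := fun i ↦ c i ^ (Z.index * Nat.card f.ker)
  -- `c i ^ Z.index` centralizes the finite kernel, so its `|ker f|`-th power commutes with `b j`
  have hb (i j) : Commute (b i) (b j) := by
    rw [show b i = (c i ^ Z.index) ^ Nat.card f.ker from pow_mul ..]
    exact f.commute_pow_card_ker (Z.pow_index_mem _) (by rw [hfc, hfc]; exact hKcomm _ _)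
  have hcomm : Pairwise fun i j ↦ ∀ x y, Commute (zpowersHom G (b i) x) (zpowersHom G (b j) y) :=
    fun i j _ x y ↦ (hb i j).zpow_zpow _ _
  refine hasFreeAbelianRank_of_lift_pow hf ι hn (MonoidHom.noncommPiCoprod _ hcomm) fun i ↦ ?_
  rw [MonoidHom.noncommPiCoprod_mulSingle, zpowersHom_apply, toAdd_ofAdd, zpow_one, hfc]

end FreeAbelianRank

theorem QuotientGroup.finite_ker_map_of_isCompact {A : Type*} [Group A] [TopologicalSpace A]
    [IsTopologicalGroup A] {M N : Subgroup A} [M.Normal] [N.Normal] (hMN : M ≤ N)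
    (hM : IsOpen (M : Set A)) (hN : IsCompact (N : Set A)) :
    Finite (map M N (MonoidHom.id A) hMN).ker := by
  have := discreteTopology hM
  have hker : (map M N (MonoidHom.id A) hMN).ker = N.map (mk' M) := ker_map _ _ _ hMN
  rw [hker]
  exact ((hN.image continuous_mk).finite_of_discrete).to_subtype

/-- Well-definedness of the rank of an almost abelian group: there is a `k` such that for
every compact, open, normal subgroup `N` of `A`, the quotient `A/N` is discrete, finitely
generated and virtually abelian of rank `k`. -/
theorem rank_well_defined (A : Type*) [Group A] [TopologicalSpace A] [IsTopologicalGroup A]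
    (hA : AlmostAbelian A) :
    ∃ k : ℕ, ∀ (N : Subgroup A) (_ : N.Normal),
      IsCompact (N : Set A) → IsOpen (N : Set A) →
      DiscreteTopology (A ⧸ N) ∧ Group.FG (A ⧸ N) ∧ HasFreeAbelianRank (A ⧸ N) k := by
  obtain ⟨N₀, _, hN₀open, hN₀cpt, -, _, hN₀va⟩ := hA
  obtain ⟨k, hk⟩ := hN₀va.exists_hasFreeAbelianRank
  refine ⟨k, fun N _ hNcpt hNopen ↦ ?_⟩
  have hM : IsOpen ((N ⊓ N₀ : Subgroup A) : Set A) := hNopen.inter hN₀open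
  have hπ₀ := QuotientGroup.finite_ker_map_of_isCompact inf_le_right hM hN₀cpt
  have hπ := QuotientGroup.finite_ker_map_of_isCompact inf_le_left hM hNcpt
  have hsurj {N' : Subgroup A} [N'.Normal] (h : N ⊓ N₀ ≤ N') :
      Function.Surjective (QuotientGroup.map _ N' (MonoidHom.id A) h) :=
    QuotientGroup.map_surjective_of_surjective _ _ _ QuotientGroup.mk_surjective h
  have : Group.FG (A ⧸ N ⊓ N₀) := Group.fg_of_surjective_of_finite_ker (hsurj inf_le_right)
  exact ⟨QuotientGroup.discreteTopology hNopen, Group.fg_of_surjective (hsurj inf_le_left),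
    (hk.of_surjective_of_finite_ker (hsurj inf_le_right)).map_of_finite_ker (hsurj inf_le_left)⟩
end
end

section
/- Let A be an almost abelian topological group and let B < A be a closed subgroup. Then rk(B) ≤ rk(A). Moreover rk(B) = rk(A) if and only if B is cocompact in A. -/
/-! Work in `A ⧸ N` for a compact open normal `N`. The image `BN/N` of `B` is `B ⧸ (B ∩ N)`,
and a subgroup of a group containing `ℤ^k` with finite index contains some `ℤ^j`, `j ≤ k`, with
finite index, where `j = k` exactly when the subgroup has finite index (elementary divisors over
`ℤ`). This `j` is the rank of `B`: `B ∩ N` is compact open in `B`, and dividing a discrete group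
by a compact, hence finite, normal subgroup keeps the rank, because `ℤ^k` is torsion-free.
Finally `A ⧸ B` is compact iff the open subgroup `BN` has finite index, since `N` is compact. -/

noncomputable section

open Subgroup

local notation:max "ℤ^" k:max => Multiplicative (Fin k → ℤ)

theorem rank_eq_of_addEquiv_fin_int {j k : ℕ} (e : (Fin j → ℤ) ≃+ (Fin k → ℤ)) : j = k := by
  simpa using card_eq_of_linearEquiv ℤ e.toIntLinearEquiv

theorem AddSubgroup.exists_addEquiv_fin_int {k : ℕ} (S : AddSubgroup (Fin k → ℤ)) :
    ∃ j ≤ k, Nonempty (S ≃+ (Fin j → ℤ)) ∧ (j = k ↔ S.FiniteIndex) := by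
  obtain ⟨j, b⟩ := Submodule.basisOfPid (Pi.basisFun ℤ (Fin k)) (AddSubgroup.toIntSubmodule S)
  let f : S ≃+ (Fin j → ℤ) := b.equivFun.toAddEquiv
  refine ⟨j, ?_, ⟨f⟩, ?_⟩
  · simpa [Module.finrank_eq_card_basis b] using
      Submodule.finrank_le (AddSubgroup.toIntSubmodule S)
  · rw [AddSubgroup.finiteIndex_iff, Int.addSubgroup_index_ne_zero_iff]
    exact ⟨by rintro rfl; exact ⟨f⟩, fun ⟨g⟩ => rank_eq_of_addEquiv_fin_int (f.symm.trans g)⟩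

theorem Subgroup.exists_mulEquiv_fin_int {k : ℕ} (S : Subgroup ℤ^k) :
    ∃ j ≤ k, Nonempty (S ≃* ℤ^j) ∧ (j = k ↔ S.FiniteIndex) := by
  obtain ⟨j, hjk, ⟨f⟩, hj⟩ := AddSubgroup.exists_addEquiv_fin_int S.toAddSubgroup
  exact ⟨j, hjk, ⟨AddEquiv.toMultiplicative (G := S.toAddSubgroup) f⟩,
    hj.trans finiteIndex_toAddSubgroup_iff⟩

theorem Subgroup.finiteIndex_subgroupOf_iff {G : Type*} [Group G] {H K : Subgroup G}
    [K.FiniteIndex] : (H.subgroupOf K).FiniteIndex ↔ H.FiniteIndex := by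
  rw [← isFiniteRelIndex_iff_finiteIndex, isFiniteRelIndex_iff_relIndex_ne_zero, finiteIndex_iff]
  refine ⟨fun h => ?_, mt index_eq_zero_of_relIndex_eq_zero⟩
  rw [← relIndex_top_right]
  exact relIndex_ne_zero_trans h (by rw [relIndex_top_right]; exact FiniteIndex.index_ne_zero)

def Subgroup.subgroupOfCommEquiv {G : Type*} [Group G] (H K : Subgroup G) :
    K.subgroupOf H ≃* H.subgroupOf K where
  toFun x := ⟨⟨x.1, x.2⟩, x.1.2⟩
  invFun y := ⟨⟨y.1, y.2⟩, y.1.2⟩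
  left_inv _ := rfl
  right_inv _ := rfl
  map_mul' _ _ := rfl

namespace HasFreeAbelianRank

variable {G G' : Type*} [Group G] [Group G'] {k : ℕ}

theorem of_mulEquiv (e : G ≃* G') (h : HasFreeAbelianRank G k) : HasFreeAbelianRank G' k := by
  obtain ⟨K, hK, ⟨eK⟩⟩ := h
  refine ⟨K.map (e : G →* G'), ?_, ⟨(e.subgroupMap K).symm.trans eK⟩⟩
  rw [finiteIndex_iff, index_map_equiv]
  exact hK.index_ne_zero

theorem exists_subgroup (h : HasFreeAbelianRank G k) (H : Subgroup G) :
    ∃ j ≤ k, HasFreeAbelianRank H j ∧ (j = k ↔ H.FiniteIndex) := by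
  obtain ⟨K, hK, ⟨e⟩⟩ := h
  obtain ⟨j, hjk, ⟨f⟩, hj⟩ := ((H.subgroupOf K).map (e : K →* ℤ^k)).exists_mulEquiv_fin_int
  refine ⟨j, hjk, ⟨K.subgroupOf H, inferInstance,
    ⟨(subgroupOfCommEquiv H K).trans ((e.subgroupMap _).trans f)⟩⟩, ?_⟩
  rw [hj, finiteIndex_iff, index_map_equiv, ← finiteIndex_iff, finiteIndex_subgroupOf_iff]

theorem eq_of_freeAbelian {m : ℕ} (h : HasFreeAbelianRank ℤ^m k) : k = m := by
  obtain ⟨S, hS, ⟨f⟩⟩ := h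
  obtain ⟨j, -, ⟨g⟩, hj⟩ := S.exists_mulEquiv_fin_int
  exact (rank_eq_of_addEquiv_fin_int (MulEquiv.toAdditive (f.symm.trans g))).trans (hj.mpr hS)

theorem unique {m : ℕ} (hk : HasFreeAbelianRank G k) (hm : HasFreeAbelianRank G m) : k = m := by
  obtain ⟨K, hK, ⟨e⟩⟩ := hm
  obtain ⟨j, -, hj, hjk⟩ := hk.exists_subgroup K
  exact (hjk.mpr hK).symm.trans (hj.of_mulEquiv e).eq_of_freeAbelian

theorem of_surjective (f : G →* G') (hf : Function.Surjective f) [Finite f.ker]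
    (h : HasFreeAbelianRank G k) : HasFreeAbelianRank G' k := by
  obtain ⟨K, hK, ⟨e⟩⟩ := h
  have : IsMulTorsionFree K := e.injective.isMulTorsionFree e.toMonoidHom
  have hinj : Function.Injective (f.domRestrict K) := by
    rw [injective_iff_map_eq_one]
    intro x hx
    have hx_fin : IsOfFinOrder (⟨x, hx⟩ : f.ker) := isOfFinOrder_of_finite _
    rw [← f.ker.subtype_injective.isOfFinOrder_iff] at hx_fin
    exact (K.subtype_injective.isOfFinOrder_iff.mp hx_fin).eq_one'
  refine ⟨K.map f, finiteIndex_iff.mpr fun h0 => hK.index_ne_zero ?_, ⟨?_⟩⟩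
  · simpa [h0] using index_map_dvd (H := K) hf
  · exact ((MonoidHom.ofInjective hinj).trans
      (MulEquiv.subgroupCongr (f.domRestrict_range K))).symm.trans e

end HasFreeAbelianRank

section Topological

variable {G : Type*} [Group G] [TopologicalSpace G] [IsTopologicalGroup G]

theorem HasFreeAbelianRank.quotient_of_le {P R : Subgroup G} [P.Normal] [R.Normal] (hPR : P ≤ R)
    (hP : IsOpen (P : Set G)) (hR : IsCompact (R : Set G)) {k : ℕ}
    (h : HasFreeAbelianRank (G ⧸ P) k) : HasFreeAbelianRank (G ⧸ R) k := by
  have : DiscreteTopology (G ⧸ P) := QuotientGroup.discreteTopology hP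
  have hPR' : P ≤ R.comap (MonoidHom.id G) := hPR
  have : Finite (QuotientGroup.map P R (MonoidHom.id G) hPR').ker := by
    rw [QuotientGroup.ker_map, comap_id]
    exact ((hR.image QuotientGroup.continuous_mk).finite_of_discrete).to_subtype
  exact h.of_surjective _
    (QuotientGroup.map_surjective_of_surjective P R _ QuotientGroup.mk_surjective hPR')

theorem IsRankOf.eq_of_hasFreeAbelianRank_quotient {k m : ℕ} (hk : IsRankOf G k)
    {N : Subgroup G} [N.Normal] (hNo : IsOpen (N : Set G)) (hNc : IsCompact (N : Set G))
    (hm : HasFreeAbelianRank (G ⧸ N) m) : k = m := by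
  obtain ⟨M, _, hMo, hMc, -, -, hk⟩ := hk
  have hR : IsCompact ((M ⊔ N : Subgroup G) : Set G) := by
    rw [mul_normal]
    exact hMc.mul hNc
  exact (hk.quotient_of_le le_sup_left hMo hR).unique (hm.quotient_of_le le_sup_right hNo hR)

theorem finite_quotient_sup_of_compactSpace_quotient (B : Subgroup G) {N : Subgroup G}
    (hNo : IsOpen (N : Set G)) [CompactSpace (G ⧸ B)] : Finite (G ⧸ (B ⊔ N)) := by
  have : DiscreteTopology (G ⧸ (B ⊔ N)) :=
    QuotientGroup.discreteTopology (isOpen_mono le_sup_right hNo)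
  have hsurj : Function.Surjective (quotientMapOfLE (le_sup_left : B ≤ B ⊔ N)) := by
    rintro ⟨g⟩
    exact ⟨QuotientGroup.mk g, rfl⟩
  have : CompactSpace (G ⧸ (B ⊔ N)) := hsurj.compactSpace (continuous_id.quotient_map' _)
  exact finite_of_compact_of_discrete

open Pointwise in
theorem compactSpace_quotient_of_finite_quotient_sup (B : Subgroup G) {N : Subgroup G}
    [N.Normal] (hNc : IsCompact (N : Set G)) [Finite (G ⧸ (B ⊔ N))] :
    CompactSpace (G ⧸ B) := by
  let F := Set.range (Quotient.out : G ⧸ (B ⊔ N) → G)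
  suffices hcover : QuotientGroup.mk '' (F * (N : Set G)) = (Set.univ : Set (G ⧸ B)) from
    ⟨hcover ▸ ((Set.finite_range _).isCompact.mul hNc).image QuotientGroup.continuous_mk⟩
  refine Set.eq_univ_of_forall fun q => ?_
  induction q using QuotientGroup.induction_on with | H g => ?_
  obtain ⟨h, hh⟩ := QuotientGroup.mk_out_eq_mul (B ⊔ N) g
  obtain ⟨n, hn, b, hb, hnb⟩ : (h : G)⁻¹ ∈ (N : Set G) * B := by
    rw [← normal_mul, sup_comm]
    exact inv_mem h.2
  refine ⟨(QuotientGroup.mk g : G ⧸ (B ⊔ N)).out * n, Set.mul_mem_mul ⟨_, rfl⟩ hn, ?_⟩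
  rw [QuotientGroup.eq, hh, show (g * h * n)⁻¹ * g = n⁻¹ * (h : G)⁻¹ by group, ← hnb,
    inv_mul_cancel_left]
  exact hb

theorem compactSpace_quotient_iff_finiteIndex_map (B : Subgroup G) {N : Subgroup G} [N.Normal]
    (hNo : IsOpen (N : Set G)) (hNc : IsCompact (N : Set G)) :
    CompactSpace (G ⧸ B) ↔ (B.map (QuotientGroup.mk' N)).FiniteIndex := by
  rw [finiteIndex_iff, index_map, QuotientGroup.ker_mk', QuotientGroup.range_mk', index_top,
    mul_one, index_ne_zero_iff_finite]
  exact ⟨fun _ => finite_quotient_sup_of_compactSpace_quotient B hNo,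
    fun _ => compactSpace_quotient_of_finite_quotient_sup B hNc⟩

end Topological

theorem rank_le_and_eq_iff_cocompact_general
    (A : Type*) [Group A] [TopologicalSpace A] [IsTopologicalGroup A]
    (B : Subgroup A) (hB : IsClosed (B : Set A))
    (kA kB : ℕ) (hkA : IsRankOf A kA) (hkB : IsRankOf (↥B) kB) :
    kB ≤ kA ∧ (kB = kA ↔ CocompactIn B) := by
  obtain ⟨N, _, hNo, hNc, -, -, hN⟩ := hkA
  obtain ⟨j, hjk, hj, hj_iff⟩ := hN.exists_subgroup (B.map (QuotientGroup.mk' N))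
  let φ := (QuotientGroup.mk' N).domRestrict B
  have hker : φ.ker = N.subgroupOf B := by
    rw [MonoidHom.ker_domRestrict, QuotientGroup.ker_mk']
  have hφ : HasFreeAbelianRank (B ⧸ φ.ker) j :=
    hj.of_mulEquiv ((QuotientGroup.quotientKerEquivRange φ).trans
      (MulEquiv.subgroupCongr ((QuotientGroup.mk' N).domRestrict_range B))).symm
  have hkB_eq : kB = j := hkB.eq_of_hasFreeAbelianRank_quotient
    (by rw [hker, coe_subgroupOf]; exact hNo.preimage continuous_subtype_val)
    (by rw [hker, coe_subgroupOf]; exact hB.isClosedEmbedding_subtypeVal.isCompact_preimage hNc)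
    hφ
  subst hkB_eq
  exact ⟨hjk, hj_iff.trans (compactSpace_quotient_iff_finiteIndex_map B hNo hNc).symm⟩

/-- For a closed subgroup `B` of an almost abelian group `A`: `rk(B) ≤ rk(A)`, with equality
if and only if `B` is cocompact in `A`. -/
theorem rank_le_and_eq_iff_cocompact
    (A : Type*) [Group A] [TopologicalSpace A] [IsTopologicalGroup A]
    (hA : AlmostAbelian A)
    (B : Subgroup A) (hB : IsClosed (B : Set A))
    (kA kB : ℕ) (hkA : IsRankOf A kA) (hkB : IsRankOf (↥B) kB) :
    kB ≤ kA ∧ (kB = kA ↔ CocompactIn B) :=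
  rank_le_and_eq_iff_cocompact_general A B hB kA kB hkA hkB
end
end

section
/- Let P0, r0 > 0 and r ≥ 0. Then there exists M0 = M0(P0,r0,r) such that the following holds. Let X be a proper, geodesically complete, (P0,r0)-packed CAT(0)-space, let G < Isom(X) be closed, and let μ be a left-invariant Haar measure on G. Then μ(S̄_r(x)^p) ≤ M0^{p−1}·μ(S̄_r(x)) for every x ∈ X and every p ∈ ℕ, where S̄_r(x)^p denotes the set of products of p elements of S̄_r(x). -/
open Metric Set Pointwise
open scoped ENNReal

noncomputable section

/-- A unit-speed geodesic from `x` to `y`, parametrized on `[0, dist x y]`. -/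
def IsGeodesicSeg {X : Type*} [MetricSpace X] (c : ℝ → X) (x y : X) : Prop :=
  c 0 = x ∧ c (dist x y) = y ∧
    ∀ s ∈ Set.Icc (0 : ℝ) (dist x y), ∀ t ∈ Set.Icc (0 : ℝ) (dist x y),
      dist (c s) (c t) = |s - t|

/-- A geodesic metric space: any two points are joined by a geodesic. -/
def IsGeodesicSpace (X : Type*) [MetricSpace X] : Prop :=
  ∀ x y : X, ∃ c : ℝ → X, IsGeodesicSeg c x y

/-- The comparison point at arclength parameter `s` on the Euclidean segment from `a` to `b`. -/
def cmpPoint (a b : EuclideanSpace ℝ (Fin 2)) (s : ℝ) : EuclideanSpace ℝ (Fin 2) :=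
  a + (s / dist a b) • (b - a)

/-- A CAT(0)-space: a geodesic space in which every geodesic triangle is thinner than its
Euclidean comparison triangle. -/
def IsCAT0 (X : Type*) [MetricSpace X] : Prop :=
  IsGeodesicSpace X ∧
    ∀ (x y z : X) (c₁ c₂ : ℝ → X), IsGeodesicSeg c₁ x y → IsGeodesicSeg c₂ x z →
      ∀ x' y' z' : EuclideanSpace ℝ (Fin 2),
        dist x' y' = dist x y → dist x' z' = dist x z → dist y' z' = dist y z →
          ∀ s ∈ Set.Icc (0 : ℝ) (dist x y), ∀ t ∈ Set.Icc (0 : ℝ) (dist x z),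
            dist (c₁ s) (c₂ t) ≤ dist (cmpPoint x' y' s) (cmpPoint x' z' t)

/-- Geodesically complete: every geodesic segment extends to a (full) geodesic line. -/
def GeodesicallyComplete (X : Type*) [MetricSpace X] : Prop :=
  ∀ (a b : ℝ) (c : ℝ → X),
    (∀ s ∈ Set.Icc a b, ∀ t ∈ Set.Icc a b, dist (c s) (c t) = |s - t|) →
    ∃ l : ℝ → X, Isometry l ∧ ∀ s ∈ Set.Icc a b, l s = c s

/-- `(P₀, r₀)`-packed: every `2r₀`-separated subset of a closed ball of radius `3r₀`
has at most `P₀` elements. -/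
def IsPacked (P₀ r₀ : ℝ) (X : Type*) [MetricSpace X] : Prop :=
  ∀ (x : X) (s : Finset X), ↑s ⊆ Metric.closedBall x (3 * r₀) →
    (∀ y ∈ s, ∀ z ∈ s, y ≠ z → 2 * r₀ < dist y z) → (s.card : ℝ) ≤ P₀

/-- The compact-open topology on the isometry group of a metric space. -/
instance isomTopology (X : Type*) [MetricSpace X] : TopologicalSpace (X ≃ᵢ X) :=
  TopologicalSpace.induced
    (fun g : X ≃ᵢ X => (⟨(g : X → X), g.continuous⟩ : C(X, X))) inferInstance

/-- `G` is `D`-cocompact: `G ⬝ B̄(x, D) = X` for every `x`. -/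
def IsDCocompact {X : Type*} [MetricSpace X] (G : Subgroup (X ≃ᵢ X)) (D : ℝ) : Prop :=
  ∀ x y : X, ∃ g ∈ G, dist x (g y) ≤ D

/-- The quotient metric space `G \ X` has diameter at most `D`:
the infimum `inf_{g ∈ G} d(x, g y)` is `≤ D` for all `x, y`. -/
def QuotDiamLE {X : Type*} [MetricSpace X] (G : Subgroup (X ≃ᵢ X)) (D : ℝ) : Prop :=
  ∀ x y : X, ∀ ε > 0, ∃ g ∈ G, dist x (g y) < D + ε

/-- `G` is cocompact: the quotient `G \ X` is compact; equivalently there is a compact set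
whose `G`-translates cover `X`. -/
def IsCocompactAction {X : Type*} [MetricSpace X] (G : Subgroup (X ≃ᵢ X)) : Prop :=
  ∃ K : Set X, IsCompact K ∧ ∀ x : X, ∃ g ∈ G, (g : X ≃ᵢ X) x ∈ K

/-- A topological group is unimodular if it admits a left and right invariant Haar measure,
i.e. a Borel measure, positive on open sets and finite on compact sets, invariant under all
left and right translations. -/
def IsUnimodularGroup (G : Type*) [Group G] [TopologicalSpace G] : Prop :=
  ∃ μ : @MeasureTheory.Measure G (borel G),
    (∀ K : Set G, IsCompact K → μ K ≠ ⊤) ∧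
    (∀ U : Set G, IsOpen U → U.Nonempty → 0 < μ U) ∧
    (∀ (g : G) (A : Set G), μ ((fun h => g * h) '' A) = μ A) ∧
    (∀ (g : G) (A : Set G), μ ((fun h => h * g) '' A) = μ A)

/-- An isometry is elliptic if it has a fixed point (equivalently, the displacement infimum
is attained and equals `0`). -/
def IsEllipticIso {X : Type*} [MetricSpace X] (g : X ≃ᵢ X) : Prop :=
  ∃ x : X, g x = x

/-- Translation length of an isometry. -/
def translationLength {X : Type*} [MetricSpace X] (g : X ≃ᵢ X) : ℝ :=
  ⨅ x : X, dist x (g x)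

/-- An isometry is semisimple if its displacement infimum is attained
(it is then elliptic or hyperbolic). -/
def IsSemisimpleIso {X : Type*} [MetricSpace X] (g : X ≃ᵢ X) : Prop :=
  ∃ x : X, dist x (g x) = translationLength g

/-- The free systole of `G` at `x`: infimum of displacements at `x` of non-elliptic
elements of `G` (`⊤` if there are none). -/
def freeSystoleAt {X : Type*} [MetricSpace X] (G : Subgroup (X ≃ᵢ X)) (x : X) : ℝ≥0∞ :=
  ⨅ g ∈ {g : X ≃ᵢ X | g ∈ G ∧ ¬ IsEllipticIso g}, edist x (g x)

/-- The free systole of `G`. -/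
def freeSystole {X : Type*} [MetricSpace X] (G : Subgroup (X ≃ᵢ X)) : ℝ≥0∞ :=
  ⨅ x : X, freeSystoleAt G x

/-- The free diastole of `G`. -/
def freeDiastole {X : Type*} [MetricSpace X] (G : Subgroup (X ≃ᵢ X)) : ℝ≥0∞ :=
  ⨆ x : X, freeSystoleAt G x

/-- The open almost stabilizer `G_r(x) = ⟨S_r(x)⟩`. -/
def openAlmostStab {X : Type*} [MetricSpace X] (G : Subgroup (X ≃ᵢ X)) (x : X) (r : ℝ) :
    Subgroup (X ≃ᵢ X) :=
  Subgroup.closure {g : X ≃ᵢ X | g ∈ G ∧ dist x (g x) < r}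

/-- The closed almost stabilizer `Ḡ_r(x) = ⟨S̄_r(x)⟩`. -/
def closedAlmostStab {X : Type*} [MetricSpace X] (G : Subgroup (X ≃ᵢ X)) (x : X) (r : ℝ) :
    Subgroup (X ≃ᵢ X) :=
  Subgroup.closure {g : X ≃ᵢ X | g ∈ G ∧ dist x (g x) ≤ r}

end

open Pointwise MeasureTheory

/-!
Every element of `S̄_r(x)^p` moves `x` by at most `p r`. Pick a maximal family `T ⊆ S̄_r(x)^p`
whose orbit points `t x` are `r`-separated; maximality gives `S̄_r(x)^p ⊆ ⋃_{t ∈ T} t S̄_r(x)`,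
so `μ(S̄_r(x)^p) ≤ |T| μ(S̄_r(x))` by left invariance. The points `t x` form an `r`-separated
subset of `B̄(x, p r)`, and such sets have at most exponentially many (in `p`) points:
in a geodesically complete CAT(0) space, pushing points away from `x` along geodesic lines by a
factor `r₀ / ρ` expands distances by that factor, so `(P₀, r₀)`-packing gives `(P₀, ρ)`-packing
for every `ρ ≤ r₀`; and in a geodesic space a `2ρ`-separated subset of `B̄(x, (3 + k) ρ)` has at
most `P₀^(k+1)` points, by retracting it by `ρ` towards `x` and inducting on `k`.
-/

theorem dist_euclideanSpace_fin_two (p q : EuclideanSpace ℝ (Fin 2)) :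
    dist p q = √((p 0 - q 0) ^ 2 + (p 1 - q 1) ^ 2) := by
  rw [EuclideanSpace.dist_eq, Fin.sum_univ_two, Real.dist_eq, Real.dist_eq, sq_abs, sq_abs]

theorem exists_euclideanSpace_triangle {a b c : ℝ} (ha : 0 ≤ a) (hb : 0 ≤ b)
    (hab : c ≤ a + b) (hbc : a ≤ b + c) (hac : b ≤ a + c) :
    ∃ A B C : EuclideanSpace ℝ (Fin 2), dist A B = a ∧ dist A C = b ∧ dist B C = c := by
  have hc : 0 ≤ c := by linarith
  rcases ha.eq_or_lt with rfl | ha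
  · obtain rfl : b = c := by linarith
    refine ⟨0, 0, !₂[b, 0], dist_self 0, ?_, ?_⟩ <;>
      simp [dist_euclideanSpace_fin_two, Real.sqrt_sq hb]
  -- the third vertex `(u, v)`, with `u` read off the law of cosines
  set u := (a ^ 2 + b ^ 2 - c ^ 2) / (2 * a)
  have hu : u ^ 2 ≤ b ^ 2 := by
    rw [div_pow, div_le_iff₀ (by positivity)]
    nlinarith [mul_nonneg (mul_nonneg (by linarith : (0 : ℝ) ≤ c - a + b)
      (by linarith : (0 : ℝ) ≤ c + a - b))
      (mul_nonneg (by linarith : (0 : ℝ) ≤ a + b - c) (by linarith : (0 : ℝ) ≤ a + b + c))]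
  set v := √(b ^ 2 - u ^ 2)
  have hv : v ^ 2 = b ^ 2 - u ^ 2 := Real.sq_sqrt (by linarith)
  have hau : a * u = (a ^ 2 + b ^ 2 - c ^ 2) / 2 := by simp only [u]; field_simp
  refine ⟨0, !₂[a, 0], !₂[u, v], ?_, ?_, ?_⟩ <;>
    simp only [dist_euclideanSpace_fin_two, PiLp.zero_apply, Matrix.cons_val_zero,
      Matrix.cons_val_one, Matrix.cons_val_fin_one, zero_sub, sub_self, even_two, Even.neg_pow,
      ne_eq, OfNat.ofNat_ne_zero, not_false_eq_true, zero_pow, add_zero]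
  · exact Real.sqrt_sq ha.le
  · rw [show u ^ 2 + v ^ 2 = b ^ 2 by rw [hv]; ring, Real.sqrt_sq hb]
  · rw [show (a - u) ^ 2 + v ^ 2 = c ^ 2 by rw [hv]; linear_combination (-2 : ℝ) * hau,
      Real.sqrt_sq hc]

theorem cmpPoint_mul_dist (A B : EuclideanSpace ℝ (Fin 2)) (θ : ℝ) :
    cmpPoint A B (θ * dist A B) = A + θ • (B - A) := by
  rcases eq_or_ne A B with rfl | h
  · simp [cmpPoint]
  · rw [cmpPoint, mul_div_assoc, div_self (dist_ne_zero.2 h), mul_one]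

theorem dist_cmpPoint_mul_dist (A B C : EuclideanSpace ℝ (Fin 2)) {θ : ℝ} (hθ : 0 ≤ θ) :
    dist (cmpPoint A B (θ * dist A B)) (cmpPoint A C (θ * dist A C)) = θ * dist B C := by
  rw [cmpPoint_mul_dist, cmpPoint_mul_dist, dist_add_left, dist_smul₀, dist_sub_right,
    Real.norm_of_nonneg hθ]

theorem exists_finset_pairwise_lt_dist_covering {α Y : Type*} [PseudoMetricSpace Y] (f : α → Y)
    {A : Set α} {r : ℝ} (hr : 0 ≤ r) (N : ℝ)
    (hN : ∀ T : Finset α, ↑T ⊆ A → (T : Set α).Pairwise (fun a b => r < dist (f a) (f b)) →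
      (T.card : ℝ) ≤ N) :
    ∃ T : Finset α, ↑T ⊆ A ∧ (T : Set α).Pairwise (fun a b => r < dist (f a) (f b)) ∧
      ∀ a ∈ A, ∃ t ∈ T, dist (f t) (f a) ≤ r := by
  classical
  by_contra! hmax
  have hgrow : ∀ m : ℕ, ∃ T : Finset α, ↑T ⊆ A ∧
      (T : Set α).Pairwise (fun a b => r < dist (f a) (f b)) ∧ T.card = m := by
    intro m
    induction m with
    | zero => exact ⟨∅, by simp, by simp, rfl⟩
    | succ m ih =>
      obtain ⟨T, hTA, hTsep, rfl⟩ := ih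
      obtain ⟨a, ha, hfar⟩ := hmax T hTA hTsep
      have haT : a ∉ T := fun h => (hfar a h).not_ge (by rwa [dist_self])
      refine ⟨insert a T, ?_, ?_, Finset.card_insert_of_notMem haT⟩
      · rw [Finset.coe_insert]
        exact Set.insert_subset ha hTA
      · rw [Finset.coe_insert, Set.pairwise_insert]
        exact ⟨hTsep, fun b hb _ => ⟨by rw [dist_comm]; exact hfar b hb, hfar b hb⟩⟩
  obtain ⟨T, hTA, hTsep, hT⟩ := hgrow (⌊N⌋₊ + 1)
  have := hN T hTA hTsep
  rw [hT, Nat.cast_add_one] at this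
  exact (Nat.lt_floor_add_one N).not_ge this

theorem measure_le_card_mul_of_subset_biUnion {H : Type*} [Mul H] [MeasurableSpace H]
    {μ : Measure H} (hμ : ∀ (g : H) (A : Set H), μ ((fun h => g * h) '' A) = μ A)
    {A B : Set H} {T : Finset H} (hAB : A ⊆ ⋃ t ∈ T, (fun h => t * h) '' B) :
    μ A ≤ T.card * μ B :=
  calc μ A ≤ μ (⋃ t ∈ T, (fun h => t * h) '' B) := measure_mono hAB
    _ ≤ ∑ t ∈ T, μ ((fun h => t * h) '' B) := measure_biUnion_finset_le T _
    _ = T.card * μ B := by simp only [hμ, Finset.sum_const, nsmul_eq_mul]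

section MetricGeometry

variable {X : Type*} [MetricSpace X]

theorem Isometry.dist_apply_zero_apply {l : ℝ → X} (hl : Isometry l) {a : ℝ} (ha : 0 ≤ a) :
    dist (l 0) (l a) = a := by
  rw [hl.dist_eq, dist_comm, Real.dist_0_eq_abs, abs_of_nonneg ha]

theorem isGeodesicSeg_of_isometry {l : ℝ → X} (hl : Isometry l) {a : ℝ} (ha : 0 ≤ a) :
    IsGeodesicSeg l (l 0) (l a) :=
  ⟨rfl, by rw [hl.dist_apply_zero_apply ha], fun s _ t _ => by rw [hl.dist_eq, Real.dist_eq]⟩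

theorem IsCAT0.dist_le_mul_dist (hX : IsCAT0 X) {l₁ l₂ : ℝ → X} (hl₁ : Isometry l₁)
    (hl₂ : Isometry l₂) (h₀ : l₁ 0 = l₂ 0) {a b θ : ℝ} (ha : 0 ≤ a) (hb : 0 ≤ b)
    (hθ₀ : 0 ≤ θ) (hθ₁ : θ ≤ 1) :
    dist (l₁ (θ * a)) (l₂ (θ * b)) ≤ θ * dist (l₁ a) (l₂ b) := by
  have hseg₁ := isGeodesicSeg_of_isometry hl₁ ha
  have hseg₂ := isGeodesicSeg_of_isometry hl₂ hb
  rw [← h₀] at hseg₂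
  have hda := hl₁.dist_apply_zero_apply ha
  have hdb : dist (l₁ 0) (l₂ b) = b := h₀ ▸ hl₂.dist_apply_zero_apply hb
  obtain ⟨A, B, C, hAB, hAC, hBC⟩ := exists_euclideanSpace_triangle dist_nonneg dist_nonneg
    (dist_triangle_left (l₁ a) (l₂ b) (l₁ 0)) (dist_triangle_right (l₁ 0) (l₁ a) (l₂ b))
    (dist_triangle (l₁ 0) (l₁ a) (l₂ b))
  calc dist (l₁ (θ * a)) (l₂ (θ * b))
      ≤ dist (cmpPoint A B (θ * dist A B)) (cmpPoint A C (θ * dist A C)) := by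
        rw [hAB, hAC, hda, hdb]
        refine hX.2 _ _ _ l₁ l₂ hseg₁ hseg₂ A B C hAB hAC hBC _ ⟨?_, ?_⟩ _ ⟨?_, ?_⟩ <;>
          [positivity; (rw [hda]; nlinarith); positivity; (rw [hdb]; nlinarith)]
    _ = θ * dist (l₁ a) (l₂ b) := by rw [dist_cmpPoint_mul_dist A B C hθ₀, hBC]

theorem GeodesicallyComplete.exists_isometry_apply_dist (hc : GeodesicallyComplete X)
    (hg : IsGeodesicSpace X) (x y : X) :
    ∃ l : ℝ → X, Isometry l ∧ l 0 = x ∧ l (dist x y) = y := by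
  obtain ⟨c, hc₀, hc₁, hcd⟩ := hg x y
  obtain ⟨l, hl, hlc⟩ := hc 0 (dist x y) c hcd
  exact ⟨l, hl, by rw [hlc 0 ⟨le_rfl, dist_nonneg⟩, hc₀],
    by rw [hlc _ ⟨dist_nonneg, le_rfl⟩, hc₁]⟩

/-- Pushing every point away from `x` along a geodesic line, by the factor `c`. -/
theorem IsCAT0.exists_radial_expansion (hX : IsCAT0 X) (hc : GeodesicallyComplete X) (x : X)
    {c : ℝ} (hc₁ : 1 ≤ c) :
    ∃ z : X → X,
      (∀ y, dist x (z y) = c * dist x y) ∧ ∀ y y', c * dist y y' ≤ dist (z y) (z y') := by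
  choose l hl hl₀ hld using hc.exists_isometry_apply_dist hX.1 x
  have hc₀ : 0 < c := by linarith
  have hz : ∀ y, dist x (l y (c * dist x y)) = c * dist x y := fun y => by
    rw [← hl₀ y, (hl y).dist_apply_zero_apply (by positivity), hl₀]
  refine ⟨fun y => l y (c * dist x y), hz, fun y y' => ?_⟩
  have h := hX.dist_le_mul_dist (hl y) (hl y') ((hl₀ y).trans (hl₀ y').symm)
    (a := c * dist x y) (b := c * dist x y') (by positivity) (by positivity) (inv_nonneg.2 hc₀.le)
    (inv_le_one_of_one_le₀ hc₁)
  rw [inv_mul_cancel_left₀ hc₀.ne', inv_mul_cancel_left₀ hc₀.ne', hld, hld] at h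
  exact (le_inv_mul_iff₀ hc₀).1 h

theorem IsPacked.one_le {P₀ r₀ : ℝ} (hP : IsPacked P₀ r₀ X) (hr₀ : 0 ≤ r₀) (x : X) : 1 ≤ P₀ := by
  simpa using hP x {x} (by simpa using by positivity) (by simp)

theorem IsPacked.of_radial_expansion {P₀ ρ c : ℝ} (hc : 0 < c) (hP : IsPacked P₀ (c * ρ) X)
    (hz : ∀ x : X, ∃ z : X → X,
      (∀ y, dist x (z y) = c * dist x y) ∧ ∀ y y', c * dist y y' ≤ dist (z y) (z y')) :
    IsPacked P₀ ρ X := by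
  classical
  intro x s hs hsep
  obtain ⟨z, hzx, hzz⟩ := hz x
  have hinj : Set.InjOn z s := fun a _ b _ hab => dist_le_zero.1 <|
    (mul_le_mul_iff_right₀ hc).1 (by simpa [hab] using hzz a b)
  rw [← Finset.card_image_of_injOn hinj]
  refine hP x _ ?_ ?_
  · intro w hw
    obtain ⟨y, hy, rfl⟩ := Finset.mem_image.1 hw
    have hy := hs hy
    rw [mem_closedBall, dist_comm] at hy ⊢
    rw [hzx]
    nlinarith
  · simp only [Finset.mem_image]
    rintro _ ⟨a, ha, rfl⟩ _ ⟨b, hb, rfl⟩ hab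
    have := hsep a ha b hb (ne_of_apply_ne z hab)
    nlinarith [hzz a b]

theorem IsCAT0.isPacked_of_le (hX : IsCAT0 X) (hc : GeodesicallyComplete X) {P₀ r₀ ρ : ℝ}
    (hP : IsPacked P₀ r₀ X) (hρ : 0 < ρ) (hρr₀ : ρ ≤ r₀) : IsPacked P₀ ρ X := by
  have hc₁ : 1 ≤ r₀ / ρ := (one_le_div hρ).2 hρr₀
  refine IsPacked.of_radial_expansion (by positivity) ?_
    fun x => hX.exists_radial_expansion hc x hc₁
  rwa [div_mul_cancel₀ _ hρ.ne']

theorem IsPacked.card_le_card_mul {P₀ ρ : ℝ} (hP : IsPacked P₀ ρ X) {s T : Finset X}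
    (hs : (s : Set X).Pairwise (fun a b => 2 * ρ < dist a b))
    (hT : ∀ y ∈ s, ∃ t ∈ T, dist t y ≤ 3 * ρ) :
    (s.card : ℝ) ≤ T.card * P₀ := by
  classical
  have hcover : s ⊆ T.biUnion fun t => s.filter fun y => dist t y ≤ 3 * ρ := fun y hy => by
    obtain ⟨t, ht, hty⟩ := hT y hy
    exact Finset.mem_biUnion.2 ⟨t, ht, Finset.mem_filter.2 ⟨hy, hty⟩⟩
  have hpiece : ∀ t ∈ T, ((s.filter fun y => dist t y ≤ 3 * ρ).card : ℝ) ≤ P₀ := fun t _ =>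
    hP t _ (fun y hy => by
        rw [Finset.coe_filter] at hy
        rw [mem_closedBall, dist_comm]
        exact hy.2)
      (fun a ha b hb hab => hs (Finset.mem_filter.1 ha).1 (Finset.mem_filter.1 hb).1 hab)
  calc (s.card : ℝ) ≤ ∑ t ∈ T, ((s.filter fun y => dist t y ≤ 3 * ρ).card : ℝ) := by
        exact_mod_cast (Finset.card_le_card hcover).trans Finset.card_biUnion_le
    _ ≤ ∑ _t ∈ T, P₀ := Finset.sum_le_sum hpiece
    _ = T.card * P₀ := by rw [Finset.sum_const, nsmul_eq_mul]

theorem IsGeodesicSpace.exists_dist_le_of_dist_le_add (hX : IsGeodesicSpace X) {x y : X}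
    {R ρ : ℝ} (hR : 0 ≤ R) (hρ : 0 ≤ ρ) (hy : dist x y ≤ R + ρ) :
    ∃ y', dist x y' ≤ R ∧ dist y' y ≤ ρ := by
  obtain ⟨c, hc₀, hc₁, hc⟩ := hX x y
  have ht : min R (dist x y) ∈ Icc 0 (dist x y) := ⟨le_min hR dist_nonneg, min_le_right _ _⟩
  refine ⟨c (min R (dist x y)), ?_, ?_⟩
  · have h := hc 0 ⟨le_rfl, dist_nonneg⟩ _ ht
    rw [hc₀, zero_sub, abs_neg, abs_of_nonneg ht.1] at h
    exact h.trans_le (min_le_left _ _)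
  · have h := hc _ ht _ ⟨dist_nonneg, le_rfl⟩
    rw [hc₁, abs_sub_comm, abs_of_nonneg (sub_nonneg.2 ht.2)] at h
    rw [h]
    rcases le_total R (dist x y) with h | h
    · rw [min_eq_left h]; linarith
    · rw [min_eq_right h, sub_self]; exact hρ

theorem IsPacked.card_le_pow (hX : IsGeodesicSpace X) {P₀ ρ : ℝ} (hP : IsPacked P₀ ρ X)
    (hρ : 0 < ρ) (k : ℕ) {x : X} {s : Finset X} (hs : ↑s ⊆ closedBall x ((3 + k) * ρ))
    (hsep : (s : Set X).Pairwise (fun a b => 2 * ρ < dist a b)) :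
    (s.card : ℝ) ≤ P₀ ^ (k + 1) := by
  classical
  induction k generalizing s with
  | zero => simpa using hP x s (by simpa using hs) hsep
  | succ k ih =>
    have hretract : ∀ y ∈ s, ∃ y', dist x y' ≤ (3 + k) * ρ ∧ dist y' y ≤ ρ := fun y hy =>
      hX.exists_dist_le_of_dist_le_add (by positivity) hρ.le <| by
        have := hs hy
        rw [mem_closedBall, dist_comm] at this
        push_cast at this
        linarith
    choose! pr hpr using hretract
    obtain ⟨T, hTs, hTsep, hTcov⟩ := exists_finset_pairwise_lt_dist_covering id
      (A := (s.image pr : Set X)) (by positivity : 0 ≤ 2 * ρ) (s.image pr).card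
      fun T hT _ => by exact_mod_cast Finset.card_le_card (Finset.coe_subset.1 hT)
    have hT : ↑T ⊆ closedBall x ((3 + k) * ρ) := fun t ht => by
      obtain ⟨y, hy, rfl⟩ := Finset.mem_image.1 (hTs ht)
      rw [mem_closedBall, dist_comm]
      exact (hpr y hy).1
    have hscover : ∀ y ∈ s, ∃ t ∈ T, dist t y ≤ 3 * ρ := fun y hy => by
      obtain ⟨t, ht, hty⟩ := hTcov (pr y) (Finset.mem_image_of_mem pr hy)
      have hty : dist t (pr y) ≤ 2 * ρ := hty
      exact ⟨t, ht, by linarith [dist_triangle t (pr y) y, (hpr y hy).2]⟩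
    calc (s.card : ℝ) ≤ T.card * P₀ := hP.card_le_card_mul hsep hscover
      _ ≤ P₀ ^ (k + 1) * P₀ :=
        mul_le_mul_of_nonneg_right (ih hT hTsep) (zero_le_one.trans (hP.one_le hρ.le x))
      _ = P₀ ^ (k + 1 + 1) := (pow_succ _ _).symm

theorem IsCAT0.card_le_pow_of_pairwise_lt_dist (hX : IsCAT0 X) (hc : GeodesicallyComplete X)
    {P₀ r₀ r : ℝ} (hP : IsPacked P₀ r₀ X) (hr₀ : 0 < r₀) (hr : 0 ≤ r) (m : ℕ) {x : X}
    {s : Finset X} (hs : ↑s ⊆ closedBall x (m * r))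
    (hsep : (s : Set X).Pairwise (fun a b => r < dist a b)) :
    (s.card : ℝ) ≤ P₀ ^ (m * ⌈r / min (r / 2) r₀⌉₊ + 1) := by
  rcases hr.eq_or_lt with rfl | hr
  · have hsx : s ⊆ {x} := by
      rw [mul_zero, closedBall_zero] at hs
      exact_mod_cast hs
    calc (s.card : ℝ) ≤ 1 := by
          exact_mod_cast (Finset.card_le_card hsx).trans (Finset.card_singleton x).le
      _ ≤ _ := one_le_pow₀ (hP.one_le hr₀.le x)
  -- at the scale `ρ` packing still holds and `r`-separated sets are `2ρ`-separated
  set ρ := min (r / 2) r₀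
  have hρ : 0 < ρ := lt_min (half_pos hr) hr₀
  have h2ρ : 2 * ρ ≤ r := by linarith [min_le_left (r / 2) r₀]
  have hrK : r ≤ ⌈r / ρ⌉₊ * ρ := (div_le_iff₀ hρ).1 (Nat.le_ceil _)
  refine (hX.isPacked_of_le hc hP hρ (min_le_right _ _)).card_le_pow hX.1 hρ _ (x := x)
    (fun y hy => ?_) (hsep.mono' fun a b h => h2ρ.trans_lt h)
  have hy := hs hy
  rw [mem_closedBall] at hy ⊢
  push_cast
  nlinarith [mul_le_mul_of_nonneg_left hrK (Nat.cast_nonneg (α := ℝ) m)]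

end MetricGeometry

section IsometryGroup

variable {X : Type*} [MetricSpace X]

/-- The set `S̄_r(x)`. -/
def displacementSet (G : Subgroup (X ≃ᵢ X)) (x : X) (r : ℝ) : Set G :=
  {g | dist x ((g : X ≃ᵢ X) x) ≤ r}

variable {G : Subgroup (X ≃ᵢ X)} {x : X} {r : ℝ}

theorem one_mem_displacementSet (hr : 0 ≤ r) : (1 : G) ∈ displacementSet G x r := by
  simpa [displacementSet] using hr

theorem displacementSet_pow_subset (p : ℕ) :
    displacementSet G x r ^ p ⊆ displacementSet G x (p * r) := by
  induction p with
  | zero =>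
    rintro g rfl
    simp [displacementSet]
  | succ p ih =>
    rintro _ ⟨a, ha, b, hb, rfl⟩
    calc dist x ((a : X ≃ᵢ X) ((b : X ≃ᵢ X) x))
        ≤ dist x ((a : X ≃ᵢ X) x) + dist ((a : X ≃ᵢ X) x) ((a : X ≃ᵢ X) ((b : X ≃ᵢ X) x)) :=
          dist_triangle _ _ _
      _ ≤ p * r + r := by rw [IsometryEquiv.dist_eq]; exact add_le_add (ih ha) hb
      _ = (p + 1 : ℕ) * r := by push_cast; ring

theorem inv_mul_mem_displacementSet {t g : G}
    (h : dist ((t : X ≃ᵢ X) x) ((g : X ≃ᵢ X) x) ≤ r) : t⁻¹ * g ∈ displacementSet G x r := by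
  change dist x ((t : X ≃ᵢ X)⁻¹ ((g : X ≃ᵢ X) x)) ≤ r
  rwa [← (t : X ≃ᵢ X).dist_eq, IsometryEquiv.apply_inv_self]

/-- Translates of `S̄_r(x)` by a maximal family in `A` with `r`-separated orbit points cover `A`. -/
theorem measure_le_ofReal_mul_measure_displacementSet [MeasurableSpace G] {μ : Measure G}
    (hμ : ∀ (g : G) (A : Set G), μ ((fun h => g * h) '' A) = μ A) (hr : 0 ≤ r) {A : Set G}
    (N : ℝ) (hN : ∀ T : Finset G, ↑T ⊆ A →
      (T : Set G).Pairwise (fun a b => r < dist ((a : X ≃ᵢ X) x) ((b : X ≃ᵢ X) x)) →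
        (T.card : ℝ) ≤ N) :
    μ A ≤ ENNReal.ofReal N * μ (displacementSet G x r) := by
  obtain ⟨T, hTA, hTsep, hTcov⟩ :=
    exists_finset_pairwise_lt_dist_covering (fun g : G => (g : X ≃ᵢ X) x) hr N hN
  calc μ A ≤ T.card * μ (displacementSet G x r) :=
        measure_le_card_mul_of_subset_biUnion hμ fun g hg => by
          obtain ⟨t, ht, htg⟩ := hTcov g hg
          exact mem_iUnion₂.2 ⟨t, ht, t⁻¹ * g, inv_mul_mem_displacementSet htg,
            mul_inv_cancel_left t g⟩
    _ ≤ ENNReal.ofReal N * μ (displacementSet G x r) := by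
        rw [← ENNReal.ofReal_natCast]
        gcongr
        exact hN T hTA hTsep

theorem IsCAT0.card_le_pow_of_subset_displacementSet_pow (hX : IsCAT0 X)
    (hc : GeodesicallyComplete X) {P₀ r₀ : ℝ} (hP : IsPacked P₀ r₀ X) (hr₀ : 0 < r₀)
    (hr : 0 ≤ r) (p : ℕ) {T : Finset G} (hT : ↑T ⊆ displacementSet G x r ^ p)
    (hsep : (T : Set G).Pairwise (fun a b => r < dist ((a : X ≃ᵢ X) x) ((b : X ≃ᵢ X) x))) :
    (T.card : ℝ) ≤ P₀ ^ (p * ⌈r / min (r / 2) r₀⌉₊ + 1) := by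
  classical
  have hinj : Set.InjOn (fun g : G => (g : X ≃ᵢ X) x) T := fun a ha b hb hab => by
    by_contra hne
    have hab : (a : X ≃ᵢ X) x = (b : X ≃ᵢ X) x := hab
    exact (hsep ha hb hne).not_ge (by rwa [hab, dist_self])
  rw [← Finset.card_image_of_injOn hinj]
  refine hX.card_le_pow_of_pairwise_lt_dist hc hP hr₀ hr p (x := x) ?_ ?_
  · rw [Finset.coe_image]
    rintro _ ⟨g, hg, rfl⟩
    rw [mem_closedBall, dist_comm]
    exact displacementSet_pow_subset p (hT hg)
  · rw [Finset.coe_image, hinj.pairwise_image]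
    exact hsep

end IsometryGroup

/-- Doubling-type estimate for the Haar measure of powers of the almost-stabilizing sets
`S̄_r(x)` in a closed group of isometries of a proper, geodesically complete, packed
CAT(0)-space. -/
theorem haar_measure_of_powers (P₀ r₀ r : ℝ) (hP₀ : 0 < P₀) (hr₀ : 0 < r₀) (hr : 0 ≤ r) :
    ∃ M₀ : ℝ, 0 < M₀ ∧
      ∀ (X : Type*) [MetricSpace X], ProperSpace X → GeodesicallyComplete X →
        IsCAT0 X → IsPacked P₀ r₀ X →
        ∀ G : Subgroup (X ≃ᵢ X), IsClosed (G : Set (X ≃ᵢ X)) →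
          ∀ μ : @MeasureTheory.Measure ↥G (borel ↥G),
            (∀ K : Set ↥G, IsCompact K → μ K ≠ ⊤) →
            (∀ U : Set ↥G, IsOpen U → U.Nonempty → 0 < μ U) →
            (∀ (g : ↥G) (A : Set ↥G), μ ((fun h => g * h) '' A) = μ A) →
            ∀ (x : X) (p : ℕ),
              μ ({g : ↥G | dist x ((g : X ≃ᵢ X) x) ≤ r} ^ p) ≤
                ENNReal.ofReal (M₀ ^ (p - 1)) *
                  μ {g : ↥G | dist x ((g : X ≃ᵢ X) x) ≤ r} := by
  set K := ⌈r / min (r / 2) r₀⌉₊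
  refine ⟨P₀ ^ (2 * K + 1), by positivity, ?_⟩
  intro X _ _ hc hX hP G _ μ _ _ hμ x p
  let _ : MeasurableSpace G := borel G
  change μ (displacementSet G x r ^ p) ≤ _ * μ (displacementSet G x r)
  rcases lt_or_ge p 2 with hp | hp
  · have hsub : displacementSet G x r ^ p ⊆ displacementSet G x r := by
      interval_cases p
      · simpa using one_mem_displacementSet hr
      · rw [pow_one]
    rw [Nat.sub_eq_zero_of_le (by omega), pow_zero, ENNReal.ofReal_one, one_mul]
    exact measure_mono hsub
  · obtain ⟨n, rfl⟩ := Nat.exists_eq_add_of_le' hp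
    calc μ (displacementSet G x r ^ (n + 2))
        ≤ ENNReal.ofReal (P₀ ^ ((n + 2) * K + 1)) * μ (displacementSet G x r) :=
          measure_le_ofReal_mul_measure_displacementSet hμ hr _ fun T hT hsep =>
            hX.card_le_pow_of_subset_displacementSet_pow hc hP hr₀ hr _ hT hsep
      _ ≤ ENNReal.ofReal ((P₀ ^ (2 * K + 1)) ^ (n + 2 - 1)) * μ (displacementSet G x r) := by
          rw [← pow_mul]
          gcongr
          · exact hP.one_le hr₀.le x
          · rw [show n + 2 - 1 = n + 1 from rfl]
            nlinarith
end
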